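/- (Lee bounds, binary outcome.) Under the multilayered sample selection model with Assumptions RCT and LM, suppose P(D_0 > 0) > 0 and each Y_{z,d} takes values in {0,1}, and set p := P(D>0 | Z=0) / P(D>0 | Z=1). Then max{0, 1 − (1/p)·P[Y=0 | D>0, Z=1]} − E[Y | D>0, Z=0] ≤ E[Y_{1,D_1} − Y_{0,D_0} | AE] ≤ min{1, (1/p)·P[Y=1 | D>0, Z=1]} − E[Y | D>0, Z=0]. -/

import Mathlib

open MeasureTheory ProbabilityTheory

/-- Realized layer `D = D_1·Z + D_0·(1−Z)` (for `Z` valued in `{0,1}`). -/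
def Dreal {Ω : Type*} (Z D0 D1 : Ω → ℕ) (ω : Ω) : ℕ :=
  D1 ω * Z ω + D0 ω * (1 - Z ω)

/-- Realized outcome `Y = Σ_{d=1}^K [Y_{1,d}·Z + Y_{0,d}·(1−Z)]·1{D=d}`. -/
noncomputable def Yreal {Ω : Type*} (K : ℕ) (Z D0 D1 : Ω → ℕ) (Y : ℕ → ℕ → Ω → ℝ)
    (ω : Ω) : ℝ :=
  ∑ d ∈ Finset.Icc 1 K,
    (Y 1 d ω * (Z ω : ℝ) + Y 0 d ω * (1 - (Z ω : ℝ))) *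
      (if Dreal Z D0 D1 ω = d then 1 else 0)

/-- `Y_{z,D_{z'}}(ω) = Σ_{d=1}^K Y_{z,d}(ω) · 1{D_{z'}(ω) = d}`. -/
noncomputable def YzD {Ω : Type*} (K : ℕ) (Y : ℕ → ℕ → Ω → ℝ) (z : ℕ) (Dz' : Ω → ℕ)
    (ω : Ω) : ℝ :=
  ∑ d ∈ Finset.Icc 1 K, Y z d ω * (if Dz' ω = d then 1 else 0)

/-- Assumption RCT: the σ-algebra generated by the potential outcomes
`Y_{z,d}` (for `z ∈ {0,1}`, `d ∈ {1,…,K}`) together with `D_0, D_1` is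
independent of (the σ-algebra generated by) `Z`. -/
def RCT {Ω : Type*} [MeasurableSpace Ω] (P : Measure Ω) (K : ℕ)
    (Y : ℕ → ℕ → Ω → ℝ) (D0 D1 Z : Ω → ℕ) : Prop :=
  Indep
    ((⨆ z ∈ ({0, 1} : Set ℕ), ⨆ d ∈ Set.Icc 1 K, MeasurableSpace.comap (Y z d) inferInstance)
      ⊔ MeasurableSpace.comap D0 inferInstance ⊔ MeasurableSpace.comap D1 inferInstance)
    (MeasurableSpace.comap Z inferInstance) P

/-- Assumption LM (Lee's monotonicity): `P(1{D_1>0} ≥ 1{D_0>0}) = 1`. -/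
def LM {Ω : Type*} [MeasurableSpace Ω] (P : Measure Ω) (D0 D1 : Ω → ℕ) : Prop :=
  P {ω | (if 0 < D0 ω then (1 : ℝ) else 0) ≤ (if 0 < D1 ω then (1 : ℝ) else 0)} = 1

/-! By LM the always-employed population coincides, up to a null set, with `A₀ = {D₀ > 0}`,
which is almost surely contained in `A₁ = {D₁ > 0}`. By RCT, conditioning additionally on
`Z = z` leaves the probabilities of events in the potential outcomes unchanged, so the observed
quantities are `p = P(A₀) / P(A₁)`, `P(Y_{1,D₁} = c | A₁)` and
`E[Y | D > 0, Z = 0] = P(Y_{0,D₀} = 1 | A₀) = E[Y_{0,D₀} | AE]`. What remains is the share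
`P(A₀ ∩ G) / P(A₀)` of `G = {Y_{1,D₁} = 1}` in `A₀`, and trimming bounds it:
`P(A₀ ∩ G) ≤ P(A₁ ∩ G)` and `P(A₀) ≤ P(A₀ ∩ G) + P(A₁ ∩ Gᶜ)`. -/

open Set Filter

section ZeroOneValued

variable {Ω : Type*} {f : Ω → ℝ}

lemma indicator_setOf_eq_one_of_zero_or_one (hf : ∀ ω, f ω = 0 ∨ f ω = 1) :
    {ω | f ω = 1}.indicator 1 = f := by
  funext ω
  rcases hf ω with h | h <;> simp [h]

lemma setOf_eq_zero_of_zero_or_one (hf : ∀ ω, f ω = 0 ∨ f ω = 1) :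
    {ω | f ω = 0} = {ω | f ω = 1}ᶜ := by
  ext ω
  rcases hf ω with h | h <;> simp [h]

lemma integrable_of_zero_or_one [MeasurableSpace Ω] {μ : Measure Ω} [IsFiniteMeasure μ]
    (hfm : Measurable f) (hf : ∀ ω, f ω = 0 ∨ f ω = 1) : Integrable f μ := by
  rw [← indicator_setOf_eq_one_of_zero_or_one hf]
  exact (integrable_const 1).indicator (hfm (measurableSet_singleton 1))

lemma integral_eq_measureReal_of_zero_or_one [MeasurableSpace Ω] {μ : Measure Ω}
    (hfm : Measurable f) (hf : ∀ ω, f ω = 0 ∨ f ω = 1) : ∫ ω, f ω ∂μ = μ.real {ω | f ω = 1} := by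
  have h : ∫ ω, {ω | f ω = 1}.indicator 1 ω ∂μ = μ.real {ω | f ω = 1} :=
    integral_indicator_one (hfm (measurableSet_singleton 1))
  rwa [indicator_setOf_eq_one_of_zero_or_one hf] at h

end ZeroOneValued

section Conditioning

-- `m₁` and `m₂` precede the ambient instance, so that the latter is the one synthesized.
lemma cond_inter_of_indep {Ω : Type*} {m₁ m₂ : MeasurableSpace Ω} [MeasurableSpace Ω]
    {μ : Measure Ω} [IsFiniteMeasure μ] {S T B : Set Ω} (hind : Indep m₁ m₂ μ)
    (hS : MeasurableSet[m₁] S) (hT : MeasurableSet[m₁] T) (hB : MeasurableSet[m₂] B)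
    (hSΩ : MeasurableSet S) (hBΩ : MeasurableSet B) (hμB : μ B ≠ 0) :
    μ[|S ∩ B] T = μ[|S] T := by
  have hprod := (Indep_iff m₁ m₂ μ).1 hind
  rw [cond_apply (hSΩ.inter hBΩ), cond_apply hSΩ, inter_right_comm, hprod _ _ hS hB,
    hprod _ _ (hS.inter hT) hB,
    ENNReal.mul_inv (.inr (measure_ne_top μ B)) (.inl (measure_ne_top μ S)),
    mul_mul_mul_comm, ENNReal.inv_mul_cancel hμB (measure_ne_top μ B), mul_one]

variable {Ω : Type*} [MeasurableSpace Ω] {μ : Measure Ω} {B S T : Set Ω}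

lemma cond_real_apply (hS : MeasurableSet S) (T : Set Ω) :
    (μ[|S]).real T = μ.real (S ∩ T) / μ.real S := by
  simp [Measure.real, cond_apply hS, ENNReal.toReal_mul, ENNReal.toReal_inv, div_eq_inv_mul]

lemma cond_congr_set (h : S =ᵐ[μ] T) : μ[|S] = μ[|T] := by
  rw [ProbabilityTheory.cond, ProbabilityTheory.cond, measure_congr h,
    Measure.restrict_congr_set h]

lemma cond_preimage_congr {α : Type*} {f g : Ω → α} (hB : MeasurableSet B) (hfg : EqOn f g B)
    (t : Set α) : μ[|B] (f ⁻¹' t) = μ[|B] (g ⁻¹' t) := by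
  rw [← cond_inter_self hB, hfg.inter_preimage_eq, cond_inter_self hB]

lemma integral_cond_congr {E : Type*} [NormedAddCommGroup E] [NormedSpace ℝ E] {f g : Ω → E}
    (hB : MeasurableSet B) (hfg : EqOn f g B) : ∫ ω, f ω ∂μ[|B] = ∫ ω, g ω ∂μ[|B] :=
  integral_congr_ae (ae_cond_of_forall_mem hB hfg)

lemma trimming_bounds_of_ae_le [IsFiniteMeasure μ] {A₀ A₁ : Set Ω} (G : Set Ω)
    (hA₀ : MeasurableSet A₀) (hA₁ : MeasurableSet A₁) (hA : A₀ ≤ᵐ[μ] A₁) (hμA₀ : μ A₀ ≠ 0) :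
    max 0 (1 - (μ.real A₀ / μ.real A₁)⁻¹ * (μ[|A₁]).real Gᶜ) ≤ (μ[|A₀]).real G ∧
      (μ[|A₀]).real G ≤ min 1 ((μ.real A₀ / μ.real A₁)⁻¹ * (μ[|A₁]).real G) := by
  have hmono : ∀ S, μ.real (A₀ ∩ S) ≤ μ.real (A₁ ∩ S) := fun S =>
    ENNReal.toReal_mono (measure_ne_top μ _)
      (measure_mono_ae (ae_le_set_inter hA EventuallyLE.rfl))
  have hA₀pos : 0 < μ.real A₀ := ENNReal.toReal_pos hμA₀ (measure_ne_top μ _)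
  have hA₁pos : 0 < μ.real A₁ := hA₀pos.trans_le (by simpa using hmono univ)
  have hrescale : ∀ S,
      (μ.real A₀ / μ.real A₁)⁻¹ * (μ[|A₁]).real S = μ.real (A₁ ∩ S) / μ.real A₀ := by
    intro S
    rw [cond_real_apply hA₁]
    field_simp
  have hsplit : μ.real A₀ ≤ μ.real (A₀ ∩ G) + μ.real (A₁ ∩ Gᶜ) := calc
    μ.real A₀ = μ.real (A₀ ∩ G ∪ A₀ ∩ Gᶜ) := by
        rw [← inter_union_distrib_left, union_compl_self, inter_univ]
    _ ≤ μ.real (A₀ ∩ G) + μ.real (A₀ ∩ Gᶜ) := measureReal_union_le _ _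
    _ ≤ μ.real (A₀ ∩ G) + μ.real (A₁ ∩ Gᶜ) := add_le_add_right (hmono _) _
  rw [hrescale, hrescale, cond_real_apply hA₀]
  refine ⟨max_le (by positivity) ?_, le_min ?_ ?_⟩
  · rw [sub_le_iff_le_add, ← add_div, le_div_iff₀ hA₀pos, one_mul]
    linarith
  · exact div_le_one_of_le₀ (measureReal_mono inter_subset_left) hA₀pos.le
  · exact div_le_div_of_nonneg_right (hmono G) hA₀pos.le

end Conditioning

section Model

variable {Ω : Type*} {K : ℕ} {Z D0 D1 : Ω → ℕ} {Y : ℕ → ℕ → Ω → ℝ}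

lemma YzD_eq_ite (z : ℕ) (D : Ω → ℕ) (ω : Ω) :
    YzD K Y z D ω = if D ω ∈ Finset.Icc 1 K then Y z (D ω) ω else 0 := by
  simp [YzD, mul_ite, Finset.sum_ite_eq]

lemma YzD_zero_or_one {z : ℕ} (hY : ∀ d, 1 ≤ d → d ≤ K → ∀ ω, Y z d ω = 0 ∨ Y z d ω = 1)
    (D : Ω → ℕ) (ω : Ω) : YzD K Y z D ω = 0 ∨ YzD K Y z D ω = 1 := by
  rw [YzD_eq_ite]
  split_ifs with hD
  · exact hY _ (Finset.mem_Icc.1 hD).1 (Finset.mem_Icc.1 hD).2 ω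
  · exact .inl rfl

lemma measurable_YzD {m : MeasurableSpace Ω} {z : ℕ} {D : Ω → ℕ}
    (hY : ∀ d, 1 ≤ d → d ≤ K → Measurable[m] (Y z d)) (hD : Measurable[m] D) :
    Measurable[m] (YzD K Y z D) :=
  Finset.measurable_sum _ fun d hd =>
    (hY d (Finset.mem_Icc.1 hd).1 (Finset.mem_Icc.1 hd).2).mul
    (Measurable.ite (hD (measurableSet_singleton d)) measurable_const measurable_const)

lemma eqOn_Dreal_one : EqOn (Dreal Z D0 D1) D1 {ω | Z ω = 1} := fun ω hω => by
  simp [Dreal, show Z ω = 1 from hω]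

lemma eqOn_Dreal_zero : EqOn (Dreal Z D0 D1) D0 {ω | Z ω = 0} := fun ω hω => by
  simp [Dreal, show Z ω = 0 from hω]

lemma eqOn_Yreal_one : EqOn (Yreal K Z D0 D1 Y) (YzD K Y 1 D1) {ω | Z ω = 1} := fun ω hω => by
  simp [Yreal, YzD, eqOn_Dreal_one hω, show Z ω = 1 from hω]

lemma eqOn_Yreal_zero : EqOn (Yreal K Z D0 D1 Y) (YzD K Y 0 D0) {ω | Z ω = 0} := fun ω hω => by
  simp [Yreal, YzD, eqOn_Dreal_zero hω, show Z ω = 0 from hω]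

lemma setOf_pos_and_eq {f g : Ω → ℕ} {p : Ω → Prop} (hfg : EqOn f g {ω | p ω}) :
    {ω | 0 < f ω ∧ p ω} = {ω | 0 < g ω} ∩ {ω | p ω} := by
  ext ω
  exact and_congr_left fun hB => by simp [hfg hB]

abbrev rctMeasurableSpace (K : ℕ) (Y : ℕ → ℕ → Ω → ℝ) (D0 D1 : Ω → ℕ) : MeasurableSpace Ω :=
  (⨆ z ∈ ({0, 1} : Set ℕ), ⨆ d ∈ Set.Icc 1 K, MeasurableSpace.comap (Y z d) inferInstance)
    ⊔ MeasurableSpace.comap D0 inferInstance ⊔ MeasurableSpace.comap D1 inferInstance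

lemma measurable_rct_D0 : Measurable[rctMeasurableSpace K Y D0 D1] D0 :=
  measurable_iff_comap_le.2 (le_sup_right.trans le_sup_left)

lemma measurable_rct_D1 : Measurable[rctMeasurableSpace K Y D0 D1] D1 :=
  measurable_iff_comap_le.2 le_sup_right

lemma measurable_rct_Y {z : ℕ} (hz : z ≤ 1) (d : ℕ) (hd₁ : 1 ≤ d) (hdK : d ≤ K) :
    Measurable[rctMeasurableSpace K Y D0 D1] (Y z d) := by
  have hz' : z ∈ ({0, 1} : Set ℕ) := by interval_cases z <;> simp
  refine measurable_iff_comap_le.2 (le_trans ?_ (le_sup_left.trans le_sup_left))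
  exact (le_biSup (fun d => MeasurableSpace.comap (Y z d) inferInstance)
    (show d ∈ Set.Icc 1 K from ⟨hd₁, hdK⟩)).trans
    (le_biSup (fun z => ⨆ d ∈ Set.Icc 1 K, MeasurableSpace.comap (Y z d) inferInstance) hz')

lemma measurable_rct_YzD {z : ℕ} (hz : z ≤ 1) {D : Ω → ℕ}
    (hD : Measurable[rctMeasurableSpace K Y D0 D1] D) :
    Measurable[rctMeasurableSpace K Y D0 D1] (YzD K Y z D) :=
  measurable_YzD (measurable_rct_Y hz) hD

variable [MeasurableSpace Ω] {P : Measure Ω} [IsProbabilityMeasure P]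

lemma RCT.cond_inter_eq (hRCT : RCT P K Y D0 D1 Z) (hZm : Measurable Z) {z : ℕ}
    (hz : P {ω | Z ω = z} ≠ 0) {S T : Set Ω}
    (hS : MeasurableSet[rctMeasurableSpace K Y D0 D1] S)
    (hT : MeasurableSet[rctMeasurableSpace K Y D0 D1] T) (hSΩ : MeasurableSet S) :
    P[|S ∩ {ω | Z ω = z}] T = P[|S] T :=
  cond_inter_of_indep hRCT hS hT ⟨{z}, measurableSet_singleton z, rfl⟩ hSΩ
    (hZm (measurableSet_singleton z)) hz

lemma RCT.cond_eq (hRCT : RCT P K Y D0 D1 Z) (hZm : Measurable Z) {z : ℕ}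
    (hz : P {ω | Z ω = z} ≠ 0) {T : Set Ω}
    (hT : MeasurableSet[rctMeasurableSpace K Y D0 D1] T) :
    P[|{ω | Z ω = z}] T = P T := by
  simpa using hRCT.cond_inter_eq hZm hz MeasurableSet.univ hT MeasurableSet.univ

lemma LM.ae_le (hLM : LM P D0 D1) (hD0m : Measurable D0) (hD1m : Measurable D1) :
    {ω | 0 < D0 ω} ≤ᵐ[P] {ω | 0 < D1 ω} := by
  have hmeas : MeasurableSet
      {ω | (if 0 < D0 ω then (1 : ℝ) else 0) ≤ (if 0 < D1 ω then (1 : ℝ) else 0)} :=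
    measurableSet_le (Measurable.ite (hD0m measurableSet_Ioi) measurable_const measurable_const)
      (Measurable.ite (hD1m measurableSet_Ioi) measurable_const measurable_const)
  have hae := (ae_mem_iff_measure_eq hmeas.nullMeasurableSet).2 (by rw [hLM, measure_univ])
  filter_upwards [hae] with ω hω h0
  by_contra h1
  norm_num [show 0 < D0 ω from h0, show ¬0 < D1 ω from h1] at hω

lemma LM.cond_always_employed (hLM : LM P D0 D1) (hD0m : Measurable D0)
    (hD1m : Measurable D1) :
    P[|{ω | 0 < D0 ω ∧ 0 < D1 ω}] = P[|{ω | 0 < D0 ω}] := by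
  refine cond_congr_set ?_
  filter_upwards [hLM.ae_le hD0m hD1m] with ω hω
  exact propext ⟨And.left, fun h0 => ⟨h0, hω h0⟩⟩

end Model

section Identification

variable {Ω : Type*} [MeasurableSpace Ω] {P : Measure Ω} [IsProbabilityMeasure P]
  {K : ℕ} {Z D0 D1 : Ω → ℕ} {Y : ℕ → ℕ → Ω → ℝ}

lemma measure_Z_eq_zero_ne_zero (hZm : Measurable Z) (hZ01 : ∀ ω, Z ω ≤ 1)
    (hZlt : P {ω | Z ω = 1} < 1) : P {ω | Z ω = 0} ≠ 0 := by
  have hcompl : {ω | Z ω = 1}ᶜ ⊆ {ω | Z ω = 0} := fun ω (hω : Z ω ≠ 1) =>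
    show Z ω = 0 by have := hZ01 ω; omega
  refine (tsub_pos_of_lt hZlt).trans_le ?_ |>.ne'
  rw [← prob_compl_eq_one_sub (s := {ω | Z ω = 1}) (hZm (measurableSet_singleton 1))]
  exact measure_mono hcompl

lemma cond_Z_eq_one_Dreal_pos (hRCT : RCT P K Y D0 D1 Z) (hZm : Measurable Z)
    (hZ₁ : P {ω | Z ω = 1} ≠ 0) :
    P[|{ω | Z ω = 1}] {ω | 0 < Dreal Z D0 D1 ω} = P {ω | 0 < D1 ω} :=
  (cond_preimage_congr (hZm (measurableSet_singleton 1)) eqOn_Dreal_one (Ioi 0)).trans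
    (hRCT.cond_eq hZm hZ₁ (measurable_rct_D1 measurableSet_Ioi))

lemma cond_Z_eq_zero_Dreal_pos (hRCT : RCT P K Y D0 D1 Z) (hZm : Measurable Z)
    (hZ₀ : P {ω | Z ω = 0} ≠ 0) :
    P[|{ω | Z ω = 0}] {ω | 0 < Dreal Z D0 D1 ω} = P {ω | 0 < D0 ω} :=
  (cond_preimage_congr (hZm (measurableSet_singleton 0)) eqOn_Dreal_zero (Ioi 0)).trans
    (hRCT.cond_eq hZm hZ₀ (measurable_rct_D0 measurableSet_Ioi))

lemma cond_selected_treated_Yreal (hRCT : RCT P K Y D0 D1 Z) (hZm : Measurable Z)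
    (hD1m : Measurable D1) (hZ₁ : P {ω | Z ω = 1} ≠ 0) (c : ℝ) :
    P[|{ω | 0 < Dreal Z D0 D1 ω ∧ Z ω = 1}] {ω | Yreal K Z D0 D1 Y ω = c}
      = P[|{ω | 0 < D1 ω}] {ω | YzD K Y 1 D1 ω = c} := by
  have hA₁ : MeasurableSet {ω | 0 < D1 ω} := hD1m measurableSet_Ioi
  rw [setOf_pos_and_eq eqOn_Dreal_one]
  exact (cond_preimage_congr (hA₁.inter (hZm (measurableSet_singleton 1)))
    (eqOn_Yreal_one.mono inter_subset_right) {c}).trans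
      (hRCT.cond_inter_eq hZm hZ₁ (measurable_rct_D1 measurableSet_Ioi)
        (measurable_rct_YzD le_rfl measurable_rct_D1 (measurableSet_singleton c)) hA₁)

lemma integral_selected_control_Yreal (hRCT : RCT P K Y D0 D1 Z) (hZm : Measurable Z)
    (hD0m : Measurable D0) (hZ₀ : P {ω | Z ω = 0} ≠ 0) (hg₀m : Measurable (YzD K Y 0 D0))
    (hg₀ : ∀ ω, YzD K Y 0 D0 ω = 0 ∨ YzD K Y 0 D0 ω = 1) :
    ∫ ω, Yreal K Z D0 D1 Y ω ∂(P[|{ω | 0 < Dreal Z D0 D1 ω ∧ Z ω = 0}])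
      = (P[|{ω | 0 < D0 ω}]).real {ω | YzD K Y 0 D0 ω = 1} := by
  have hA₀ : MeasurableSet {ω | 0 < D0 ω} := hD0m measurableSet_Ioi
  have hZ₀m : MeasurableSet {ω | Z ω = 0} := hZm (measurableSet_singleton 0)
  rw [setOf_pos_and_eq eqOn_Dreal_zero,
    integral_cond_congr (hA₀.inter hZ₀m) (eqOn_Yreal_zero.mono inter_subset_right),
    integral_eq_measureReal_of_zero_or_one hg₀m hg₀, measureReal_def, measureReal_def]
  congr 1
  exact hRCT.cond_inter_eq hZm hZ₀ (measurable_rct_D0 measurableSet_Ioi)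
    (measurable_rct_YzD zero_le_one measurable_rct_D0 (measurableSet_singleton 1)) hA₀

lemma integral_always_employed (hLM : LM P D0 D1) (hD0m : Measurable D0) (hD1m : Measurable D1)
    {g₀ g₁ : Ω → ℝ} (hg₀m : Measurable g₀) (hg₁m : Measurable g₁)
    (hg₀ : ∀ ω, g₀ ω = 0 ∨ g₀ ω = 1) (hg₁ : ∀ ω, g₁ ω = 0 ∨ g₁ ω = 1) :
    ∫ ω, (g₁ ω - g₀ ω) ∂(P[|{ω | 0 < D0 ω ∧ 0 < D1 ω}])
      = (P[|{ω | 0 < D0 ω}]).real {ω | g₁ ω = 1}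
        - (P[|{ω | 0 < D0 ω}]).real {ω | g₀ ω = 1} := by
  rw [hLM.cond_always_employed hD0m hD1m, integral_sub (integrable_of_zero_or_one hg₁m hg₁)
    (integrable_of_zero_or_one hg₀m hg₀), integral_eq_measureReal_of_zero_or_one hg₁m hg₁,
    integral_eq_measureReal_of_zero_or_one hg₀m hg₀]

end Identification

theorem lee_bounds_binary_general
    {Ω : Type*} [MeasurableSpace Ω] (P : Measure Ω) [IsProbabilityMeasure P]
    (K : ℕ)
    (Z D0 D1 : Ω → ℕ)
    (hZm : Measurable Z) (hD0m : Measurable D0) (hD1m : Measurable D1)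
    (hZ01 : ∀ ω, Z ω ≤ 1)
    (hZpos : 0 < P {ω | Z ω = 1}) (hZlt : P {ω | Z ω = 1} < 1)
    (Y : ℕ → ℕ → Ω → ℝ)
    (hYm : ∀ z ≤ 1, ∀ d, 1 ≤ d → d ≤ K → Measurable (Y z d))
    (hBinary : ∀ z ≤ 1, ∀ d, 1 ≤ d → d ≤ K → ∀ ω, Y z d ω = 0 ∨ Y z d ω = 1)
    (hRCT : RCT P K Y D0 D1 Z) (hLM : LM P D0 D1)
    (hD0pos : 0 < P {ω | 0 < D0 ω}) :
    (max 0 (1 - (((P[|{ω | Z ω = 0}]) {ω | 0 < Dreal Z D0 D1 ω}).toReal /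
          ((P[|{ω | Z ω = 1}]) {ω | 0 < Dreal Z D0 D1 ω}).toReal)⁻¹ *
            ((P[|{ω | 0 < Dreal Z D0 D1 ω ∧ Z ω = 1}]) {ω | Yreal K Z D0 D1 Y ω = 0}).toReal)
        - (∫ ω, Yreal K Z D0 D1 Y ω ∂(P[|{ω | 0 < Dreal Z D0 D1 ω ∧ Z ω = 0}]))
      ≤ ∫ ω, (YzD K Y 1 D1 ω - YzD K Y 0 D0 ω) ∂(P[|{ω | 0 < D0 ω ∧ 0 < D1 ω}]))
    ∧ (∫ ω, (YzD K Y 1 D1 ω - YzD K Y 0 D0 ω) ∂(P[|{ω | 0 < D0 ω ∧ 0 < D1 ω}])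
      ≤ min 1 ((((P[|{ω | Z ω = 0}]) {ω | 0 < Dreal Z D0 D1 ω}).toReal /
          ((P[|{ω | Z ω = 1}]) {ω | 0 < Dreal Z D0 D1 ω}).toReal)⁻¹ *
            ((P[|{ω | 0 < Dreal Z D0 D1 ω ∧ Z ω = 1}]) {ω | Yreal K Z D0 D1 Y ω = 1}).toReal)
        - (∫ ω, Yreal K Z D0 D1 Y ω ∂(P[|{ω | 0 < Dreal Z D0 D1 ω ∧ Z ω = 0}]))) := by
  have hZ₁ : P {ω | Z ω = 1} ≠ 0 := hZpos.ne'
  have hZ₀ : P {ω | Z ω = 0} ≠ 0 := measure_Z_eq_zero_ne_zero hZm hZ01 hZlt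
  have hg₀m : Measurable (YzD K Y 0 D0) := measurable_YzD (hYm 0 zero_le_one) hD0m
  have hg₁m : Measurable (YzD K Y 1 D1) := measurable_YzD (hYm 1 le_rfl) hD1m
  have hg₀ := YzD_zero_or_one (hBinary 0 zero_le_one) D0
  have hg₁ := YzD_zero_or_one (hBinary 1 le_rfl) D1
  rw [cond_Z_eq_zero_Dreal_pos hRCT hZm hZ₀, cond_Z_eq_one_Dreal_pos hRCT hZm hZ₁,
    cond_selected_treated_Yreal hRCT hZm hD1m hZ₁ 0,
    cond_selected_treated_Yreal hRCT hZm hD1m hZ₁ 1, setOf_eq_zero_of_zero_or_one hg₁,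
    integral_selected_control_Yreal hRCT hZm hD0m hZ₀ hg₀m hg₀,
    integral_always_employed hLM hD0m hD1m hg₀m hg₁m hg₀ hg₁]
  obtain ⟨hlower, hupper⟩ := trimming_bounds_of_ae_le {ω | YzD K Y 1 D1 ω = 1}
    (hD0m measurableSet_Ioi) (hD1m measurableSet_Ioi) (hLM.ae_le hD0m hD1m) hD0pos.ne'
  exact ⟨sub_le_sub_right hlower _, sub_le_sub_right hupper _⟩

/-- Lee bounds, binary outcome. -/
theorem lee_bounds_binary
    {Ω : Type*} [MeasurableSpace Ω] (P : Measure Ω) [IsProbabilityMeasure P]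
    (K : ℕ) (hK : 1 ≤ K)
    (Z D0 D1 : Ω → ℕ)
    (hZm : Measurable Z) (hD0m : Measurable D0) (hD1m : Measurable D1)
    (hZ01 : ∀ ω, Z ω ≤ 1) (hD0K : ∀ ω, D0 ω ≤ K) (hD1K : ∀ ω, D1 ω ≤ K)
    (hZpos : 0 < P {ω | Z ω = 1}) (hZlt : P {ω | Z ω = 1} < 1)
    (Y : ℕ → ℕ → Ω → ℝ)
    (hYm : ∀ z ≤ 1, ∀ d, 1 ≤ d → d ≤ K → Measurable (Y z d))
    (hYint : ∀ z ≤ 1, ∀ d, 1 ≤ d → d ≤ K → Integrable (Y z d) P)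
    (hBinary : ∀ z ≤ 1, ∀ d, 1 ≤ d → d ≤ K → ∀ ω, Y z d ω = 0 ∨ Y z d ω = 1)
    (hRCT : RCT P K Y D0 D1 Z) (hLM : LM P D0 D1)
    (hD0pos : 0 < P {ω | 0 < D0 ω}) :
    (max 0 (1 - (((P[|{ω | Z ω = 0}]) {ω | 0 < Dreal Z D0 D1 ω}).toReal /
          ((P[|{ω | Z ω = 1}]) {ω | 0 < Dreal Z D0 D1 ω}).toReal)⁻¹ *
            ((P[|{ω | 0 < Dreal Z D0 D1 ω ∧ Z ω = 1}]) {ω | Yreal K Z D0 D1 Y ω = 0}).toReal)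
        - (∫ ω, Yreal K Z D0 D1 Y ω ∂(P[|{ω | 0 < Dreal Z D0 D1 ω ∧ Z ω = 0}]))
      ≤ ∫ ω, (YzD K Y 1 D1 ω - YzD K Y 0 D0 ω) ∂(P[|{ω | 0 < D0 ω ∧ 0 < D1 ω}]))
    ∧ (∫ ω, (YzD K Y 1 D1 ω - YzD K Y 0 D0 ω) ∂(P[|{ω | 0 < D0 ω ∧ 0 < D1 ω}])
      ≤ min 1 ((((P[|{ω | Z ω = 0}]) {ω | 0 < Dreal Z D0 D1 ω}).toReal /
          ((P[|{ω | Z ω = 1}]) {ω | 0 < Dreal Z D0 D1 ω}).toReal)⁻¹ *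
            ((P[|{ω | 0 < Dreal Z D0 D1 ω ∧ Z ω = 1}]) {ω | Yreal K Z D0 D1 Y ω = 1}).toReal)
        - (∫ ω, Yreal K Z D0 D1 Y ω ∂(P[|{ω | 0 < Dreal Z D0 D1 ω ∧ Z ω = 0}]))) :=
  lee_bounds_binary_general P K Z D0 D1 hZm hD0m hD1m hZ01 hZpos hZlt Y hYm hBinary hRCT hLM hD0pos
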